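/- arXiv:2002.09750 — 5 statements merged into one kernel-verified Lean document; each statement's English description precedes it below -/
import Mathlib

section
/- Let n ≥ 1 and let f : ℝⁿ → ℝ be convex and Lipschitz continuous. Define the asymptotic function f'∞ : ℝⁿ → ℝ by f'∞(d) = sup_{s>0} (f(s·d) − f(0))/s (this supremum is finite because f is Lipschitz). Then for every x ∈ ℝⁿ one has inf_{u ∈ ℝⁿ} ( f(u) + f'∞(x − u) ) = f(x); that is, the inf-convolution of f with its asymptotic function equals f. -/
/-!
By convexity, the slope `(f (u + t • d) - f u) / t` is nondecreasing in `t`, so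
`f (u + d) - f u` is bounded by it for every `t ≥ 1`. Lipschitz continuity lets the base point move
from `u` to `0` at a cost of `2K‖u‖/t`, which vanishes as `t → ∞`; hence
`f (u + d) - f u ≤ f'∞ d`, i.e. `f x ≤ f u + f'∞ (x - u)`, with equality at `u = x` since
`f'∞ 0 = 0`.
-/

open NNReal Filter Topology

noncomputable def asymptoticFun {E : Type*} [AddCommGroup E] [Module ℝ E] (f : E → ℝ) (d : E) :
    ℝ :=
  ⨆ s : {s : ℝ // 0 < s}, (f (s.1 • d) - f 0) / s.1

section

variable {E : Type*}

@[simp]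
theorem asymptoticFun_zero [AddCommGroup E] [Module ℝ E] (f : E → ℝ) : asymptoticFun f 0 = 0 := by
  simp [asymptoticFun]

theorem ConvexOn.sub_le_div_of_one_le [AddCommGroup E] [Module ℝ E] {f : E → ℝ}
    (hf : ConvexOn ℝ Set.univ f) (u d : E) {t : ℝ} (ht : 1 ≤ t) :
    f (u + d) - f u ≤ (f (u + t • d) - f u) / t := by
  have ht₀ : 0 < t := one_pos.trans_le ht
  have hcomb : (1 / t) • (u + t • d) + (1 - 1 / t) • u = u + d := by
    rw [smul_add, smul_smul, one_div_mul_cancel ht₀.ne', one_smul, sub_smul, one_smul]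
    abel
  have h := hf.2 (Set.mem_univ (u + t • d)) (Set.mem_univ u) (by positivity)
    (sub_nonneg.2 ((div_le_one ht₀).2 ht)) (add_sub_cancel _ _)
  rw [hcomb, smul_eq_mul, smul_eq_mul] at h
  rw [le_div_iff₀ ht₀]
  have h' := mul_le_mul_of_nonneg_left h ht₀.le
  rw [mul_add, ← mul_assoc, ← mul_assoc, mul_one_div_cancel ht₀.ne', mul_sub, mul_one,
    mul_one_div_cancel ht₀.ne'] at h'
  linarith

theorem LipschitzWith.sub_le_mul_norm_sub [SeminormedAddCommGroup E] {f : E → ℝ} {K : ℝ≥0}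
    (hf : LipschitzWith K f) (x y : E) : f x - f y ≤ K * ‖x - y‖ := by
  simpa only [Real.dist_eq, dist_eq_norm] using (le_abs_self _).trans (hf.dist_le_mul x y)

variable [NormedAddCommGroup E] [NormedSpace ℝ E] {f : E → ℝ} {K : ℝ≥0}

theorem LipschitzWith.bddAbove_asymptotic_slopes (hf : LipschitzWith K f) (d : E) :
    BddAbove (Set.range fun s : {s : ℝ // 0 < s} => (f (s.1 • d) - f 0) / s.1) := by
  refine ⟨K * ‖d‖, ?_⟩
  rintro _ ⟨⟨s, hs⟩, rfl⟩
  rw [div_le_iff₀ hs]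
  calc f (s • d) - f 0 ≤ K * ‖s • d - 0‖ := hf.sub_le_mul_norm_sub _ _
    _ = K * ‖d‖ * s := by rw [sub_zero, norm_smul, Real.norm_of_nonneg hs.le]; ring

theorem ConvexOn.sub_le_asymptoticFun (hconv : ConvexOn ℝ Set.univ f) (hlip : LipschitzWith K f)
    (u d : E) : f (u + d) - f u ≤ asymptoticFun f d := by
  have hbound : ∀ t : ℝ, 1 ≤ t → f (u + d) - f u ≤ asymptoticFun f d + 2 * K * ‖u‖ / t := by
    intro t ht
    have ht₀ : 0 < t := one_pos.trans_le ht
    have hslope : (f (t • d) - f 0) / t ≤ asymptoticFun f d :=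
      le_ciSup (hlip.bddAbove_asymptotic_slopes d) ⟨t, ht₀⟩
    have h₁ := hlip.sub_le_mul_norm_sub (u + t • d) (t • d)
    have h₂ := hlip.sub_le_mul_norm_sub 0 u
    rw [add_sub_cancel_right] at h₁
    rw [zero_sub, norm_neg] at h₂
    calc f (u + d) - f u ≤ (f (u + t • d) - f u) / t := hconv.sub_le_div_of_one_le u d ht
      _ ≤ (f (t • d) - f 0) / t + 2 * K * ‖u‖ / t := by
        rw [← add_div]; gcongr; linarith
      _ ≤ asymptoticFun f d + 2 * K * ‖u‖ / t := by gcongr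
  have hlim : Tendsto (fun t : ℝ => asymptoticFun f d + 2 * K * ‖u‖ / t) atTop
      (𝓝 (asymptoticFun f d)) := by
    simpa using (tendsto_const_nhds (x := asymptoticFun f d)).add
      ((tendsto_const_nhds (x := 2 * (K : ℝ) * ‖u‖)).div_atTop tendsto_id)
  exact ge_of_tendsto hlim ((eventually_ge_atTop 1).mono hbound)

theorem ConvexOn.iInf_add_asymptoticFun_sub (hconv : ConvexOn ℝ Set.univ f)
    (hlip : LipschitzWith K f) (x : E) : ⨅ u, (f u + asymptoticFun f (x - u)) = f x := by
  have hle : ∀ u, f x ≤ f u + asymptoticFun f (x - u) := fun u => by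
    have := hconv.sub_le_asymptoticFun hlip u (x - u)
    rw [add_sub_cancel] at this
    linarith
  refine le_antisymm ?_ (le_ciInf hle)
  simpa using ciInf_le ⟨f x, Set.forall_mem_range.2 hle⟩ x

end

theorem infConv_asymptotic_eq_self_general (n : ℕ)
    (f : EuclideanSpace ℝ (Fin n) → ℝ)
    (hconv : ConvexOn ℝ Set.univ f) (K : ℝ≥0) (hlip : LipschitzWith K f)
    (fAsymp : EuclideanSpace ℝ (Fin n) → ℝ)
    (hfAsymp : ∀ d, fAsymp d = ⨆ s : {s : ℝ // 0 < s}, (f (s.1 • d) - f 0) / s.1)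
    (x : EuclideanSpace ℝ (Fin n)) :
    (⨅ u : EuclideanSpace ℝ (Fin n), (f u + fAsymp (x - u))) = f x := by
  obtain rfl : fAsymp = asymptoticFun f := funext hfAsymp
  exact hconv.iInf_add_asymptoticFun_sub hlip x

/-- The inf-convolution of a convex Lipschitz function `f` with its asymptotic
function `d ↦ sup_{s>0} (f (s • d) - f 0) / s` equals `f`. -/
theorem infConv_asymptotic_eq_self (n : ℕ) (hn : 1 ≤ n)
    (f : EuclideanSpace ℝ (Fin n) → ℝ)
    (hconv : ConvexOn ℝ Set.univ f) (K : ℝ≥0) (hlip : LipschitzWith K f)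
    (fAsymp : EuclideanSpace ℝ (Fin n) → ℝ)
    (hfAsymp : ∀ d, fAsymp d = ⨆ s : {s : ℝ // 0 < s}, (f (s.1 • d) - f 0) / s.1)
    (x : EuclideanSpace ℝ (Fin n)) :
    (⨅ u : EuclideanSpace ℝ (Fin n), (f u + fAsymp (x - u))) = f x :=
  infConv_asymptotic_eq_self_general n f hconv K hlip fAsymp hfAsymp x
end

section
/- Let n, m ≥ 1, let L : ℝⁿ → ℝ be convex and Lipschitz continuous with asymptotic function L'∞(d) = sup_{s>0} (L(s·d) − L(0))/s, and let u_1, …, u_m ∈ ℝⁿ and a_1, …, a_m ∈ ℝ. Define the initial data J : ℝⁿ → ℝ by J(u) = min_{i∈{1,…,m}} ( L'∞(u − u_i) + a_i ). Then for every x ∈ ℝⁿ and every t > 0, the Lax–Oleinik formula with Lagrangian L equals the neural network function f₁: inf_{u ∈ ℝⁿ} ( J(u) + t·L((x − u)/t) ) = min_{i∈{1,…,m}} ( t·L((x − u_i)/t) + a_i ). -/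
/-!
For convex `L` the difference quotients `(L (z + s • d) - L z) / s` increase with `s`, and for
Lipschitz `L` their limit as `s → ∞` does not depend on the base point `z`; hence
`t L((x - u)/t) ≤ L'∞(v - u) + t L((x - v)/t)` for every `v`. With `u = u i` and `i` a minimizing
index of `J v`, this bounds each value of the Lax–Oleinik infimum from below by some `f₁`-term.
Conversely, `L'∞ 0 = 0` gives `J (u i) ≤ a i`, so `v = u i` bounds it from above by the `i`-th term.
-/

open NNReal Filter Set Topology

theorem ciInf_eq_ciInf_of_forall_exists_le {α ι β : Type*} [ConditionallyCompleteLinearOrder β]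
    [Finite ι] [Nonempty ι] {f : α → β} {g : ι → β}
    (hfg : ∀ a, ∃ i, g i ≤ f a) (hgf : ∀ i, ∃ a, f a ≤ g i) : ⨅ a, f a = ⨅ i, g i := by
  have hg : BddBelow (range g) := (finite_range g).bddBelow
  have hf : BddBelow (range f) := by
    refine ⟨⨅ i, g i, ?_⟩
    rintro _ ⟨a, rfl⟩
    obtain ⟨i, hi⟩ := hfg a
    exact (ciInf_le hg i).trans hi
  have : Nonempty α := (hgf (Classical.arbitrary ι)).nonempty
  exact le_antisymm (ciInf_mono_of_forall_exists hf hgf) (ciInf_mono_of_forall_exists hg hfg)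

section Module

variable {E : Type*} [AddCommGroup E] [Module ℝ E]

/-- The supremum is taken in `ℝ`, so it is `0` when unbounded; for Lipschitz `f` it is bounded. -/
noncomputable def asymptoticFunction (f : E → ℝ) (d : E) : ℝ :=
  ⨆ s : {s : ℝ // 0 < s}, (f (s.1 • d) - f 0) / s.1

@[simp]
theorem asymptoticFunction_zero (f : E → ℝ) : asymptoticFunction f 0 = 0 := by
  simp [asymptoticFunction]

theorem ConvexOn.slope_le_slope_of_le {f : E → ℝ} (hf : ConvexOn ℝ univ f) (z d : E) {r s : ℝ}
    (hr : 0 < r) (hrs : r ≤ s) : (f (z + r • d) - f z) / r ≤ (f (z + s • d) - f z) / s := by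
  have hline : ConvexOn ℝ univ fun c : ℝ => f (z + c • d) := by
    simpa [Function.comp_def] using (hf.translate_right z).comp_linearMap (.toSpanSingleton ℝ E d)
  simpa using hline.secant_mono (a := 0) trivial trivial trivial hr.ne' (hr.trans_le hrs).ne' hrs

end Module

section Normed

variable {E : Type*} [NormedAddCommGroup E] {f : E → ℝ} {K : ℝ≥0}

theorem LipschitzWith.sub_le_sub_add (hf : LipschitzWith K f) (y z : E) :
    f (z + y) - f z ≤ f y - f 0 + 2 * K * ‖z‖ := by
  have h₁ := hf.norm_sub_le (z + y) y
  have h₂ := hf.norm_sub_le z 0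
  rw [Real.norm_eq_abs, add_sub_cancel_right] at h₁
  rw [Real.norm_eq_abs, sub_zero] at h₂
  linarith [le_abs_self (f (z + y) - f y), neg_abs_le (f z - f 0)]

variable [NormedSpace ℝ E]

theorem LipschitzWith.bddAbove_asymptoticSlopes (hf : LipschitzWith K f) (d : E) :
    BddAbove (range fun s : {s : ℝ // 0 < s} => (f (s.1 • d) - f 0) / s.1) := by
  refine ⟨K * ‖d‖, ?_⟩
  rintro _ ⟨⟨s, hs⟩, rfl⟩
  rw [div_le_iff₀ hs]
  calc f (s • d) - f 0 ≤ K * ‖s • d - 0‖ :=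
        (le_abs_self _).trans (Real.norm_eq_abs _ ▸ hf.norm_sub_le _ _)
    _ = K * ‖d‖ * s := by rw [sub_zero, norm_smul, Real.norm_of_nonneg hs.le]; ring

/-- Slopes increase with `s` by convexity, and for large `s` moving the base point from `0` to `z`
costs only `2 K ‖z‖ / s`. -/
theorem ConvexOn.slope_le_asymptoticFunction (hconv : ConvexOn ℝ univ f)
    (hlip : LipschitzWith K f) (z d : E) {r : ℝ} (hr : 0 < r) :
    (f (z + r • d) - f z) / r ≤ asymptoticFunction f d := by
  have hlim : Tendsto (fun s : ℝ => asymptoticFunction f d + 2 * K * ‖z‖ / s) atTop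
      (𝓝 (asymptoticFunction f d)) := by
    simpa using (tendsto_const_nhds (x := asymptoticFunction f d)).add
      ((tendsto_const_nhds (x := 2 * (K : ℝ) * ‖z‖)).div_atTop tendsto_id)
  refine ge_of_tendsto hlim (eventually_atTop.2 ⟨r, fun s hrs => ?_⟩)
  have hs : 0 < s := hr.trans_le hrs
  calc (f (z + r • d) - f z) / r ≤ (f (z + s • d) - f z) / s :=
        hconv.slope_le_slope_of_le z d hr hrs
    _ ≤ (f (s • d) - f 0) / s + 2 * K * ‖z‖ / s := by
        rw [← add_div]
        exact div_le_div_of_nonneg_right (hlip.sub_le_sub_add _ z) hs.le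
    _ ≤ asymptoticFunction f d + 2 * K * ‖z‖ / s := by
        gcongr
        exact le_ciSup (hlip.bddAbove_asymptoticSlopes d) ⟨s, hs⟩

theorem ConvexOn.perspective_add_le (hconv : ConvexOn ℝ univ f) (hlip : LipschitzWith K f)
    {t : ℝ} (ht : 0 < t) (y w : E) :
    t * f (t⁻¹ • (y + w)) ≤ t * f (t⁻¹ • y) + asymptoticFunction f w := by
  have h := hconv.slope_le_asymptoticFunction hlip (t⁻¹ • y) w (inv_pos.2 ht)
  rw [div_inv_eq_mul, ← smul_add] at h
  linarith

end Normed

theorem laxOleinik_eq_firstArchitecture_general (n m : ℕ) (hm : 1 ≤ m)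
    (L : EuclideanSpace ℝ (Fin n) → ℝ)
    (hconv : ConvexOn ℝ Set.univ L) (K : ℝ≥0) (hlip : LipschitzWith K L)
    (LAsymp : EuclideanSpace ℝ (Fin n) → ℝ)
    (hLAsymp : ∀ d, LAsymp d = ⨆ s : {s : ℝ // 0 < s}, (L (s.1 • d) - L 0) / s.1)
    (u : Fin m → EuclideanSpace ℝ (Fin n)) (a : Fin m → ℝ)
    (J : EuclideanSpace ℝ (Fin n) → ℝ)
    (hJ : ∀ v, J v = ⨅ i : Fin m, (LAsymp (v - u i) + a i))
    (x : EuclideanSpace ℝ (Fin n)) (t : ℝ) (ht : 0 < t) :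
    (⨅ v : EuclideanSpace ℝ (Fin n), (J v + t * L (t⁻¹ • (x - v)))) =
      ⨅ i : Fin m, (t * L (t⁻¹ • (x - u i)) + a i) := by
  have : Nonempty (Fin m) := Fin.pos_iff_nonempty.mp hm
  obtain rfl : LAsymp = asymptoticFunction L := funext hLAsymp
  refine ciInf_eq_ciInf_of_forall_exists_le (fun v => ?_) (fun i => ⟨u i, ?_⟩)
  · obtain ⟨i, hi⟩ := exists_eq_ciInf_of_finite
      (f := fun i => asymptoticFunction L (v - u i) + a i)
    have h := hconv.perspective_add_le hlip ht (x - v) (v - u i)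
    rw [sub_add_sub_cancel] at h
    refine ⟨i, ?_⟩
    rw [hJ, ← hi]
    linarith
  · have hJu : J (u i) ≤ a i := by
      rw [hJ]
      simpa using ciInf_le (finite_range fun j => asymptoticFunction L (u i - u j) + a j).bddBelow i
    linarith

/-- For initial data `J u = min_i (L∞ (u - u_i) + a_i)`, the Lax--Oleinik formula
with Lagrangian `L` equals the first neural network architecture `f₁`. -/
theorem laxOleinik_eq_firstArchitecture (n m : ℕ) (hn : 1 ≤ n) (hm : 1 ≤ m)
    (L : EuclideanSpace ℝ (Fin n) → ℝ)
    (hconv : ConvexOn ℝ Set.univ L) (K : ℝ≥0) (hlip : LipschitzWith K L)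
    (LAsymp : EuclideanSpace ℝ (Fin n) → ℝ)
    (hLAsymp : ∀ d, LAsymp d = ⨆ s : {s : ℝ // 0 < s}, (L (s.1 • d) - L 0) / s.1)
    (u : Fin m → EuclideanSpace ℝ (Fin n)) (a : Fin m → ℝ)
    (J : EuclideanSpace ℝ (Fin n) → ℝ)
    (hJ : ∀ v, J v = ⨅ i : Fin m, (LAsymp (v - u i) + a i))
    (x : EuclideanSpace ℝ (Fin n)) (t : ℝ) (ht : 0 < t) :
    (⨅ v : EuclideanSpace ℝ (Fin n), (J v + t * L (t⁻¹ • (x - v)))) =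
      ⨅ i : Fin m, (t * L (t⁻¹ • (x - u i)) + a i) :=
  laxOleinik_eq_firstArchitecture_general n m hm L hconv K hlip LAsymp hLAsymp u a J hJ x t ht
end

section
/- Let n, m ≥ 1, let v_1, …, v_m ∈ ℝⁿ and b_1, …, b_m ∈ ℝ satisfy assumption (H): there exists a convex function ℓ : ℝⁿ → ℝ with ℓ(v_i) = b_i for all i ∈ {1,…,m}. Define H : ℝⁿ → ℝ by H(p) = max_{i∈{1,…,m}} ( ⟨p, v_i⟩ − b_i ). Then for every v in the convex hull of {v_1, …, v_m}, the Fenchel–Legendre transform of H at v satisfies sup_{p ∈ ℝⁿ} ( ⟨p, v⟩ − H(p) ) = min { Σ_{i=1}^m α_i b_i : α ∈ Λ_m, Σ_{i=1}^m α_i v_i = v }, where Λ_m is the unit simplex; in particular this supremum is finite and the minimum on the right-hand side is attained. -/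
/-!
Weak duality is Jensen's inequality for the affine pieces: if `∑ αᵢ vᵢ = v` with `α` in the
simplex, then `⟪p, v⟫ - H p = ∑ αᵢ (⟪p, vᵢ⟫ - H p) ≤ ∑ αᵢ bᵢ`. The feasible costs `c` are the
heights with `(v, c)` in the convex hull of the lifted points `(vᵢ, bᵢ)`, so they form a compact
set and the minimum is attained. For `t` below the minimum, `(v, t)` lies outside that hull; a
separating functional `(x, s) ↦ ⟪q, x⟫ + σ s` must have `σ < 0`, and after rescaling to `σ = -1`
it yields `p` with `⟪p, vᵢ⟫ - bᵢ < ⟪p, v⟫ - t` for every `i`, i.e. `⟪p, v⟫ - H p > t`.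
-/

open RealInnerProductSpace Set

section ConvexHull

variable {R M ι : Type*} [Field R] [LinearOrder R] [IsStrictOrderedRing R]
  [AddCommGroup M] [Module R M] [Fintype ι]

theorem mem_convexHull_range_iff_exists_stdSimplex {f : ι → M} {x : M} :
    x ∈ convexHull R (range f) ↔ ∃ α ∈ stdSimplex R ι, ∑ i, α i • f i = x := by
  classical
  constructor
  · intro hx
    have hsub : convexHull R (range f) ⊆ Fintype.linearCombination R f '' stdSimplex R ι := by
      refine convexHull_min ?_ ((convex_stdSimplex R ι).linear_image _)
      rintro _ ⟨i, rfl⟩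
      exact ⟨_, ite_eq_mem_stdSimplex R i, by simp [Fintype.linearCombination_apply, ite_smul]⟩
    simpa [Fintype.linearCombination_apply] using hsub hx
  · rintro ⟨α, ⟨hα₀, hα₁⟩, rfl⟩
    exact (convex_convexHull R _).sum_mem (fun i _ => hα₀ i) hα₁
      fun i _ => subset_convexHull R _ ⟨i, rfl⟩

end ConvexHull

section PiecewiseAffineDuality

variable {E ι : Type*} [NormedAddCommGroup E] [InnerProductSpace ℝ E] [Fintype ι]

def feasibleCosts (V : ι → E) (b : ι → ℝ) (v : E) : Set ℝ :=
  {c | ∃ α ∈ stdSimplex ℝ ι, (∑ i, α i • V i) = v ∧ c = ∑ i, α i * b i}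

variable {V : ι → E} {b : ι → ℝ} {v : E}

theorem mem_feasibleCosts_iff {c : ℝ} :
    c ∈ feasibleCosts V b v ↔ (v, c) ∈ convexHull ℝ (range fun i => (V i, b i)) := by
  simp only [mem_convexHull_range_iff_exists_stdSimplex, Prod.ext_iff, Prod.fst_sum,
    Prod.snd_sum, Prod.smul_fst, Prod.smul_snd, smul_eq_mul]
  exact exists_congr fun α => and_congr_right fun _ => and_congr_right fun _ => eq_comm

theorem feasibleCosts_nonempty (b : ι → ℝ) (hv : v ∈ convexHull ℝ (range V)) :
    (feasibleCosts V b v).Nonempty := by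
  obtain ⟨α, hα, hαv⟩ := mem_convexHull_range_iff_exists_stdSimplex.mp hv
  exact ⟨_, α, hα, hαv, rfl⟩

theorem isCompact_feasibleCosts (V : ι → E) (b : ι → ℝ) (v : E) :
    IsCompact (feasibleCosts V b v) := by
  have : feasibleCosts V b v = (fun α : ι → ℝ => ∑ i, α i * b i) ''
      (stdSimplex ℝ ι ∩ {α | ∑ i, α i • V i = v}) := by
    ext c
    simp only [feasibleCosts, mem_image, mem_inter_iff, mem_ofPred_eq, and_assoc, eq_comm]
  rw [this]
  refine ((isCompact_stdSimplex ℝ ι).inter_right (isClosed_eq ?_ continuous_const)).image ?_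
  all_goals fun_prop

theorem inner_sub_iSup_le_of_mem_feasibleCosts {c : ℝ} (hc : c ∈ feasibleCosts V b v) (p : E) :
    ⟪p, v⟫ - ⨆ i, (⟪p, V i⟫ - b i) ≤ c := by
  obtain ⟨α, ⟨hα₀, hα₁⟩, rfl, rfl⟩ := hc
  have hle : ∀ i, ⟪p, V i⟫ - b i ≤ ⨆ i, (⟪p, V i⟫ - b i) :=
    le_ciSup (finite_range _).bddAbove
  calc ⟪p, ∑ i, α i • V i⟫ - ⨆ i, (⟪p, V i⟫ - b i)
      = ∑ i, α i * (⟪p, V i⟫ - ⨆ i, (⟪p, V i⟫ - b i)) := by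
        simp only [inner_sum, real_inner_smul_right, mul_sub, Finset.sum_sub_distrib,
          ← Finset.sum_mul, hα₁, one_mul]
    _ ≤ ∑ i, α i * b i :=
        Finset.sum_le_sum fun i _ => mul_le_mul_of_nonneg_left (by linarith [hle i]) (hα₀ i)

theorem ContinuousLinearMap.exists_inner_add_mul [CompleteSpace E] (f : E × ℝ →L[ℝ] ℝ) :
    ∃ q : E, ∀ x t, f (x, t) = ⟪q, x⟫ + t * f (0, 1) := by
  refine ⟨(InnerProductSpace.toDual ℝ E).symm (f.comp (.inl ℝ E ℝ)), fun x t => ?_⟩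
  have hlast : f (0, t) = t * f (0, 1) := by simpa using f.map_smul t ((0 : E), (1 : ℝ))
  simp [InnerProductSpace.toDual_symm_apply, ← f.comp_inl_add_comp_inr (x, t), hlast]

theorem exists_inner_sub_lt_of_notMem_convexHull [CompleteSpace E] {c t : ℝ} (htc : t < c)
    (hc : (v, c) ∈ convexHull ℝ (range fun i => (V i, b i)))
    (ht : (v, t) ∉ convexHull ℝ (range fun i => (V i, b i))) :
    ∃ p : E, ∀ i, ⟪p, V i⟫ - b i < ⟪p, v⟫ - t := by
  obtain ⟨f, u, hf, hu⟩ := geometric_hahn_banach_closed_point (convex_convexHull ℝ _)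
    ((finite_range fun i => (V i, b i)).isCompact_convexHull (𝕜 := ℝ)).isClosed ht
  obtain ⟨q, hq⟩ := f.exists_inner_add_mul
  set σ := f (0, 1)
  have hσ : σ < 0 := by
    have := (hf _ hc).trans hu
    rw [hq v c, hq v t] at this
    nlinarith
  have hscale : (-σ)⁻¹ * σ = -1 := by rw [inv_neg, neg_mul, inv_mul_cancel₀ hσ.ne]
  refine ⟨(-σ)⁻¹ • q, fun i => ?_⟩
  have hi := (hf _ (subset_convexHull ℝ _ ⟨i, rfl⟩)).trans hu
  rw [hq, hq v t] at hi
  have hgap : ⟪(-σ)⁻¹ • q, v⟫ - t - (⟪(-σ)⁻¹ • q, V i⟫ - b i)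
      = (-σ)⁻¹ * (⟪q, v⟫ + t * σ - (⟪q, V i⟫ + b i * σ)) := by
    simp only [real_inner_smul_left]
    linear_combination (b i - t) * hscale
  rw [← sub_pos, hgap]
  exact mul_pos (inv_pos.mpr (neg_pos.mpr hσ)) (sub_pos.mpr hi)

theorem exists_lt_inner_sub_iSup [CompleteSpace E] {t : ℝ}
    (hne : (feasibleCosts V b v).Nonempty) (ht : ∀ c ∈ feasibleCosts V b v, t < c) :
    ∃ p : E, t < ⟪p, v⟫ - ⨆ i, (⟪p, V i⟫ - b i) := by
  obtain ⟨c, hc⟩ := hne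
  have : Nonempty ι := by
    obtain ⟨α, ⟨-, hα₁⟩, -⟩ := hc
    by_contra h
    simp [not_nonempty_iff.mp h] at hα₁
  obtain ⟨p, hp⟩ := exists_inner_sub_lt_of_notMem_convexHull (ht c hc)
    (mem_feasibleCosts_iff.mp hc) fun h => (ht t (mem_feasibleCosts_iff.mpr h)).false
  obtain ⟨i, hi⟩ := exists_eq_ciSup_of_finite (f := fun i => ⟪p, V i⟫ - b i)
  exact ⟨p, by rw [lt_sub_comm, ← hi]; exact hp i⟩

theorem isLUB_inner_sub_iSup [CompleteSpace E] (b : ι → ℝ) (hv : v ∈ convexHull ℝ (range V)) :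
    IsLUB (range fun p : E => ⟪p, v⟫ - ⨆ i, (⟪p, V i⟫ - b i)) (sInf (feasibleCosts V b v)) := by
  have hne := feasibleCosts_nonempty b hv
  have hmin := (isCompact_feasibleCosts V b v).sInf_mem hne
  refine ⟨?_, fun t ht => ?_⟩
  · rintro _ ⟨p, rfl⟩
    exact inner_sub_iSup_le_of_mem_feasibleCosts hmin p
  · by_contra! hlt
    obtain ⟨p, hp⟩ := exists_lt_inner_sub_iSup hne fun c hc =>
      hlt.trans_le (csInf_le (isCompact_feasibleCosts V b v).bddBelow hc)
    exact (ht ⟨p, rfl⟩).not_gt hp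

end PiecewiseAffineDuality

theorem fenchel_of_piecewiseAffine_general (n m : ℕ)
    (V : Fin m → EuclideanSpace ℝ (Fin n)) (b : Fin m → ℝ)
    (H : EuclideanSpace ℝ (Fin n) → ℝ)
    (hH : ∀ p, H p = ⨆ i : Fin m, (⟪p, V i⟫ - b i))
    (v : EuclideanSpace ℝ (Fin n)) (hv : v ∈ convexHull ℝ (Set.range V)) :
    BddAbove (Set.range fun p : EuclideanSpace ℝ (Fin n) => ⟪p, v⟫ - H p) ∧
    (∃ α ∈ stdSimplex ℝ (Fin m), (∑ i, α i • V i) = v ∧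
        (∑ i, α i * b i) =
          sInf {c : ℝ | ∃ α ∈ stdSimplex ℝ (Fin m),
            (∑ i, α i • V i) = v ∧ c = ∑ i, α i * b i}) ∧
    (⨆ p : EuclideanSpace ℝ (Fin n), (⟪p, v⟫ - H p)) =
      sInf {c : ℝ | ∃ α ∈ stdSimplex ℝ (Fin m),
        (∑ i, α i • V i) = v ∧ c = ∑ i, α i * b i} := by
  have hlub : IsLUB (range fun p => ⟪p, v⟫ - H p) (sInf (feasibleCosts V b v)) := by
    simpa only [hH] using isLUB_inner_sub_iSup b hv
  obtain ⟨α, hα, hαv, hmin⟩ :=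
    (isCompact_feasibleCosts V b v).sInf_mem (feasibleCosts_nonempty b hv)
  exact ⟨hlub.bddAbove, ⟨α, hα, hαv, hmin.symm⟩, hlub.ciSup_eq⟩

/-- For `H p = max_i (⟨p, v_i⟩ - b_i)` with data satisfying assumption (H), the
Fenchel--Legendre transform of `H` at a point `v` of the convex hull of the `v_i`
is finite, equals the optimal value of the linear program
`min { Σ α_i b_i : α ∈ Λ_m, Σ α_i v_i = v }`, and this minimum is attained. -/
theorem fenchel_of_piecewiseAffine (n m : ℕ) (hn : 1 ≤ n) (hm : 1 ≤ m)
    (V : Fin m → EuclideanSpace ℝ (Fin n)) (b : Fin m → ℝ)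
    (ℓ : EuclideanSpace ℝ (Fin n) → ℝ) (hℓconv : ConvexOn ℝ Set.univ ℓ)
    (hℓ : ∀ i, ℓ (V i) = b i)
    (H : EuclideanSpace ℝ (Fin n) → ℝ)
    (hH : ∀ p, H p = ⨆ i : Fin m, (⟪p, V i⟫ - b i))
    (v : EuclideanSpace ℝ (Fin n)) (hv : v ∈ convexHull ℝ (Set.range V)) :
    BddAbove (Set.range fun p : EuclideanSpace ℝ (Fin n) => ⟪p, v⟫ - H p) ∧
    (∃ α ∈ stdSimplex ℝ (Fin m), (∑ i, α i • V i) = v ∧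
        (∑ i, α i * b i) =
          sInf {c : ℝ | ∃ α ∈ stdSimplex ℝ (Fin m),
            (∑ i, α i • V i) = v ∧ c = ∑ i, α i * b i}) ∧
    (⨆ p : EuclideanSpace ℝ (Fin n), (⟪p, v⟫ - H p)) =
      sInf {c : ℝ | ∃ α ∈ stdSimplex ℝ (Fin m),
        (∑ i, α i • V i) = v ∧ c = ∑ i, α i * b i} :=
  fenchel_of_piecewiseAffine_general n m V b H hH v hv
end

section
/- Let n, m ≥ 1, let v_1, …, v_m ∈ ℝⁿ and b_1, …, b_m ∈ ℝ satisfy assumption (H): there exists a convex function ℓ : ℝⁿ → ℝ with ℓ(v_i) = b_i for all i ∈ {1,…,m}. Define H : ℝⁿ → ℝ by H(p) = max_{i∈{1,…,m}} ( ⟨p, v_i⟩ − b_i ). Then for every k ∈ {1,…,m}, the Fenchel–Legendre transform of H at v_k equals b_k: sup_{p ∈ ℝⁿ} ( ⟨p, v_k⟩ − H(p) ) = b_k. -/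
/-!
A convex function `ℓ` has a subgradient `p` at `v_k` (separate the point `(v_k, ℓ v_k)` from the
open convex strict epigraph of `ℓ`). Since `ℓ (v_i) = b_i`, this says
`⟪p, v_i⟫ - b_i ≤ ⟪p, v_k⟫ - b_k` for all `i`, so the maximum defining `H p` is attained at `k`
and `⟪p, v_k⟫ - H p = b_k`. Conversely `⟪p, v_k⟫ - H p ≤ b_k` for every `p`, since `H p` dominates
its `k`-th term.
-/

open RealInnerProductSpace

theorem ContinuousLinearMap.apply_prod_eq {E : Type*} [AddCommGroup E] [TopologicalSpace E]
    [Module ℝ E] (F : StrongDual ℝ (E × ℝ)) (x : E) (t : ℝ) :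
    F (x, t) = F (x, 0) + t * F (0, 1) := by
  rw [← smul_eq_mul, ← F.map_smul, ← F.map_add]
  simp

section Subgradient

variable {E : Type*} [AddCommGroup E] [TopologicalSpace E] [IsTopologicalAddGroup E]
  [Module ℝ E] [ContinuousSMul ℝ E]

theorem ConvexOn.exists_strongDual_le_sub {ℓ : E → ℝ} (hℓ : ConvexOn ℝ Set.univ ℓ)
    (hcont : Continuous ℓ) (x₀ : E) :
    ∃ f : StrongDual ℝ E, ∀ x, f (x - x₀) ≤ ℓ x - ℓ x₀ := by
  have hconv : Convex ℝ {q : E × ℝ | ℓ q.1 < q.2} := by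
    simpa using hℓ.convex_strict_epigraph
  have hopen : IsOpen {q : E × ℝ | ℓ q.1 < q.2} :=
    isOpen_lt (hcont.comp continuous_fst) continuous_snd
  obtain ⟨F, hF⟩ := geometric_hahn_banach_open_point hconv hopen (x := (x₀, ℓ x₀)) (by simp)
  set c := F (0, 1)
  set g := F.comp (ContinuousLinearMap.inl ℝ E ℝ)
  have hsep : ∀ x t, ℓ x < t → g (x - x₀) < (t - ℓ x₀) * -c := by
    intro x t hxt
    have := hF (x, t) hxt
    rw [F.apply_prod_eq, F.apply_prod_eq x₀] at this
    simp only [g, ContinuousLinearMap.comp_apply, ContinuousLinearMap.inl_apply, map_sub]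
    linarith
  have hc : 0 < -c := by
    have := hsep x₀ (ℓ x₀ + 1) (lt_add_one _)
    simpa only [sub_self, map_zero, add_sub_cancel_left, one_mul] using this
  refine ⟨(-c)⁻¹ • g, fun x => le_of_forall_gt fun s hs => ?_⟩
  have := hsep x (s + ℓ x₀) (by linarith)
  rw [add_sub_cancel_right] at this
  rw [smul_apply, smul_eq_mul, inv_mul_lt_iff₀ hc]
  linarith

theorem ConvexOn.exists_inner_le_sub {F : Type*} [NormedAddCommGroup F] [InnerProductSpace ℝ F]
    [FiniteDimensional ℝ F] {ℓ : F → ℝ} (hℓ : ConvexOn ℝ Set.univ ℓ) (x₀ : F) :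
    ∃ p : F, ∀ x, ⟪p, x - x₀⟫ ≤ ℓ x - ℓ x₀ := by
  obtain ⟨f, hf⟩ := hℓ.exists_strongDual_le_sub hℓ.locallyLipschitz.continuous x₀
  exact ⟨(InnerProductSpace.toDual ℝ F).symm f, by simpa using hf⟩

end Subgradient

section MaxAffine

variable {E ι : Type*} [NormedAddCommGroup E] [InnerProductSpace ℝ E] [Finite ι]

theorem iSup_inner_sub_le (V : ι → E) (b : ι → ℝ) (p : E) (k : ι) :
    ⟪p, V k⟫ - ⨆ i, (⟪p, V i⟫ - b i) ≤ b k := by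
  have := le_ciSup (Set.finite_range fun i => ⟪p, V i⟫ - b i).bddAbove k
  linarith

theorem iSup_inner_sub_eq_of_inner_sub_le {V : ι → E} {b : ι → ℝ} {p : E} {k : ι}
    (hp : ∀ i, ⟪p, V i - V k⟫ ≤ b i - b k) :
    ⨆ i, (⟪p, V i⟫ - b i) = ⟪p, V k⟫ - b k := by
  have : Nonempty ι := ⟨k⟩
  refine le_antisymm (ciSup_le fun i => ?_) ?_
  · have := hp i
    rw [inner_sub_right] at this
    linarith
  · linarith [iSup_inner_sub_le V b p k]

theorem iSup_inner_sub_iSup_inner_sub_eq {V : ι → E} {b : ι → ℝ} {k : ι}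
    (h : ∃ p : E, ∀ i, ⟪p, V i - V k⟫ ≤ b i - b k) :
    ⨆ p : E, (⟪p, V k⟫ - ⨆ i, (⟪p, V i⟫ - b i)) = b k := by
  obtain ⟨p, hp⟩ := h
  refine le_antisymm (ciSup_le fun q => iSup_inner_sub_le V b q k) ?_
  refine le_ciSup_of_le ⟨b k, Set.forall_mem_range.2 fun q => iSup_inner_sub_le V b q k⟩ p ?_
  rw [iSup_inner_sub_eq_of_inner_sub_le hp, sub_sub_cancel]

end MaxAffine

theorem fenchel_at_vk_general (n m : ℕ)
    (V : Fin m → EuclideanSpace ℝ (Fin n)) (b : Fin m → ℝ)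
    (ℓ : EuclideanSpace ℝ (Fin n) → ℝ) (hℓconv : ConvexOn ℝ Set.univ ℓ)
    (hℓ : ∀ i, ℓ (V i) = b i)
    (H : EuclideanSpace ℝ (Fin n) → ℝ)
    (hH : ∀ p, H p = ⨆ i : Fin m, (⟪p, V i⟫ - b i))
    (k : Fin m) :
    (⨆ p : EuclideanSpace ℝ (Fin n), (⟪p, V k⟫ - H p)) = b k := by
  obtain rfl : H = fun p => ⨆ i : Fin m, (⟪p, V i⟫ - b i) := funext hH
  obtain ⟨p, hp⟩ := hℓconv.exists_inner_le_sub (V k)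
  exact iSup_inner_sub_iSup_inner_sub_eq ⟨p, fun i => by simpa only [hℓ] using hp (V i)⟩

/-- For `H p = max_i (⟨p, v_i⟩ - b_i)` with data satisfying assumption (H), the
Fenchel--Legendre transform of `H` at `v_k` equals `b_k`. -/
theorem fenchel_at_vk (n m : ℕ) (hn : 1 ≤ n) (hm : 1 ≤ m)
    (V : Fin m → EuclideanSpace ℝ (Fin n)) (b : Fin m → ℝ)
    (ℓ : EuclideanSpace ℝ (Fin n) → ℝ) (hℓconv : ConvexOn ℝ Set.univ ℓ)
    (hℓ : ∀ i, ℓ (V i) = b i)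
    (H : EuclideanSpace ℝ (Fin n) → ℝ)
    (hH : ∀ p, H p = ⨆ i : Fin m, (⟪p, V i⟫ - b i))
    (k : Fin m) :
    (⨆ p : EuclideanSpace ℝ (Fin n), (⟪p, V k⟫ - H p)) = b k :=
  fenchel_at_vk_general n m V b ℓ hℓconv hℓ H hH k
end

section
/- Let n, m ≥ 1, let J : ℝⁿ → ℝ be concave, and let v_1, …, v_m ∈ ℝⁿ and b_1, …, b_m ∈ ℝ satisfy assumption (H): there exists a convex function ℓ : ℝⁿ → ℝ with ℓ(v_i) = b_i for all i ∈ {1,…,m}. Define H : ℝⁿ → ℝ by H(p) = max_{i∈{1,…,m}} ( ⟨p, v_i⟩ − b_i ) and H*(v) = sup_{p ∈ ℝⁿ} ( ⟨p, v⟩ − H(p) ) for v in the convex hull of {v_1, …, v_m} (where this supremum is finite). Then for every x ∈ ℝⁿ and every t > 0, the Lax–Oleinik formula equals the neural network function f₂: inf_{v ∈ convexHull{v_1,…,v_m}} ( J(x − t·v) + t·H*(v) ) = min_{i∈{1,…,m}} ( J(x − t·v_i) + t·b_i ). -/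
/-!
`H` is the maximum of the affine functions `p ↦ ⟪p, v_i⟫ - b_i`, and LP duality (here: a
separating hyperplane in `E × ℝ`) shows that for `v` in the hull of the `v_i` the point
`(v, H* v)` lies in the convex hull of the points `(v_i, b_i)`. The function
`(v, s) ↦ J (x - t • v) + t * s` is concave, so on that hull it is minimised at some `(v_i, b_i)`;
conversely `H* v_i ≤ b_i` because `H p ≥ ⟪p, v_i⟫ - b_i`.
-/

open RealInnerProductSpace Set

theorem exists_mk_mem_convexHull {ι E : Type*} [AddCommGroup E] [Module ℝ E] {V : ι → E}
    (b : ι → ℝ) {v : E} (hv : v ∈ convexHull ℝ (range V)) :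
    ∃ s : ℝ, (v, s) ∈ convexHull ℝ (range fun i => (V i, b i)) := by
  have hfst : LinearMap.fst ℝ E ℝ '' range (fun i => (V i, b i)) = range V := by
    rw [← range_comp]; rfl
  rw [← hfst, ← LinearMap.image_convexHull] at hv
  obtain ⟨⟨_, s⟩, hs, rfl⟩ := hv
  exact ⟨s, hs⟩

variable {E ι : Type*} [NormedAddCommGroup E] [InnerProductSpace ℝ E]

theorem exists_inner_add_mul_lt_of_notMem [CompleteSpace E] {K : Set (E × ℝ)}
    (hKconv : Convex ℝ K) (hKclosed : IsClosed K) {z : E × ℝ} (hz : z ∉ K) :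
    ∃ (q : E) (α u : ℝ), (∀ y ∈ K, ⟪q, y.1⟫ + α * y.2 < u) ∧ u < ⟪q, z.1⟫ + α * z.2 := by
  obtain ⟨f, u, hfK, hfz⟩ := geometric_hahn_banach_closed_point hKconv hKclosed hz
  let q := (InnerProductSpace.toDual ℝ E).symm (f.comp (ContinuousLinearMap.inl ℝ E ℝ))
  have hf : ∀ y : E × ℝ, f y = ⟪q, y.1⟫ + f (0, 1) * y.2 := fun y => by
    have hy : y = (y.1, 0) + y.2 • ((0 : E), (1 : ℝ)) := by ext <;> simp
    conv_lhs => rw [hy, map_add, map_smul, smul_eq_mul, mul_comm]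
    simp [q, InnerProductSpace.toDual_symm_apply]
  exact ⟨q, f (0, 1), u, fun y hy => hf y ▸ hfK y hy, hf z ▸ hfz⟩

theorem ConcaveOn.sub_smul_fst_add_mul_snd {J : E → ℝ} (hJ : ConcaveOn ℝ univ J) (x : E) (t : ℝ) :
    ConcaveOn ℝ univ fun z : E × ℝ => J (x - t • z.1) + t * z.2 := by
  let g : E × ℝ →ᵃ[ℝ] E := AffineMap.const ℝ (E × ℝ) x - t • (LinearMap.fst ℝ E ℝ).toAffineMap
  exact (hJ.comp_affineMap g).add ((t • LinearMap.snd ℝ E ℝ).concaveOn convex_univ)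

noncomputable def maxAffine (V : ι → E) (b : ι → ℝ) (p : E) : ℝ :=
  ⨆ i, (⟪p, V i⟫ - b i)

noncomputable def maxAffineConjugate (V : ι → E) (b : ι → ℝ) (v : E) : ℝ :=
  ⨆ p, (⟪p, v⟫ - maxAffine V b p)

section

variable [Finite ι] (V : ι → E) (b : ι → ℝ)

theorem inner_sub_le_maxAffine (p : E) (i : ι) : ⟪p, V i⟫ - b i ≤ maxAffine V b p :=
  le_ciSup (f := fun i => ⟪p, V i⟫ - b i) (finite_range _).bddAbove i

theorem maxAffineConjugate_le (i : ι) : maxAffineConjugate V b (V i) ≤ b i :=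
  ciSup_le fun p => by linarith [inner_sub_le_maxAffine V b p i]

theorem inner_sub_maxAffine_le_of_mem_convexHull {z : E × ℝ}
    (hz : z ∈ convexHull ℝ (range fun i => (V i, b i))) (p : E) :
    ⟪p, z.1⟫ - maxAffine V b p ≤ z.2 := by
  have hconv : Convex ℝ {y : E × ℝ | ⟪p, y.1⟫ - y.2 ≤ maxAffine V b p} :=
    convex_halfSpace_le (((innerSL ℝ p).comp (ContinuousLinearMap.fst ℝ E ℝ) -
      ContinuousLinearMap.snd ℝ E ℝ).toLinearMap.isLinear) _
  have hpieces : range (fun i => (V i, b i)) ⊆ {y : E × ℝ | ⟪p, y.1⟫ - y.2 ≤ maxAffine V b p} :=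
    range_subset_iff.2 fun i => by
      simp only [mem_ofPred_eq]; linarith [inner_sub_le_maxAffine V b p i]
  have := convexHull_min hpieces hconv hz
  simp only [mem_ofPred_eq] at this
  linarith

theorem mk_maxAffineConjugate_mem_convexHull [CompleteSpace E] {v : E}
    (hv : v ∈ convexHull ℝ (range V)) :
    (v, maxAffineConjugate V b v) ∈ convexHull ℝ (range fun i => (V i, b i)) := by
  have : Nonempty ι := range_nonempty_iff_nonempty.1 (convexHull_nonempty_iff.1 ⟨v, hv⟩)
  obtain ⟨s, hs⟩ := exists_mk_mem_convexHull b hv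
  have hle : ∀ p, ⟪p, v⟫ - maxAffine V b p ≤ s :=
    inner_sub_maxAffine_le_of_mem_convexHull V b hs
  have hbdd : BddAbove (range fun p => ⟪p, v⟫ - maxAffine V b p) := ⟨s, forall_mem_range.2 hle⟩
  have hcs : maxAffineConjugate V b v ≤ s := ciSup_le hle
  by_contra hnot
  obtain ⟨q, α, u, hK, hv⟩ := exists_inner_add_mul_lt_of_notMem (convex_convexHull ℝ _)
    ((finite_range _).isClosed_convexHull ℝ) hnot
  rcases le_or_gt 0 α with hα | hα
  · linarith [hK _ hs, mul_le_mul_of_nonneg_left hcs hα]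
  · -- a non-vertical separating hyperplane is the graph of an affine map with slope `q / (-α)`
    have hinner : ∀ (y : E) (r : ℝ), ⟪(-α)⁻¹ • q, y⟫ - r = (⟪q, y⟫ + α * r) / (-α) := by
      intro y r
      have : α ≠ 0 := hα.ne
      rw [real_inner_smul_left]
      field_simp
      ring
    have hmax : maxAffine V b ((-α)⁻¹ • q) ≤ u / (-α) := ciSup_le fun i => by
      rw [hinner]
      exact div_le_div_of_nonneg_right (hK _ (subset_convexHull ℝ _ ⟨i, rfl⟩)).le (by linarith)
    have hgt : u / (-α) < ⟪(-α)⁻¹ • q, v⟫ - maxAffineConjugate V b v := by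
      rw [hinner]
      exact div_lt_div_of_pos_right hv (by linarith)
    have hsup : ⟪(-α)⁻¹ • q, v⟫ - maxAffine V b ((-α)⁻¹ • q) ≤ maxAffineConjugate V b v :=
      le_ciSup hbdd _
    linarith

end

theorem laxOleinik_eq_secondArchitecture_general (n m : ℕ) (hm : 1 ≤ m)
    (J : EuclideanSpace ℝ (Fin n) → ℝ) (hJ : ConcaveOn ℝ Set.univ J)
    (V : Fin m → EuclideanSpace ℝ (Fin n)) (b : Fin m → ℝ)
    (H : EuclideanSpace ℝ (Fin n) → ℝ)
    (hH : ∀ p, H p = ⨆ i : Fin m, (⟪p, V i⟫ - b i))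
    (Hstar : EuclideanSpace ℝ (Fin n) → ℝ)
    (hHstar : ∀ v ∈ convexHull ℝ (Set.range V),
      Hstar v = ⨆ p : EuclideanSpace ℝ (Fin n), (⟪p, v⟫ - H p))
    (x : EuclideanSpace ℝ (Fin n)) (t : ℝ) (ht : 0 < t) :
    (⨅ v : (convexHull ℝ (Set.range V) : Set (EuclideanSpace ℝ (Fin n))),
        (J (x - t • (v : EuclideanSpace ℝ (Fin n))) + t * Hstar v)) =
      ⨅ i : Fin m, (J (x - t • V i) + t * b i) := by
  obtain rfl : H = maxAffine V b := funext hH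
  have : Nonempty (Fin m) := ⟨⟨0, hm⟩⟩
  have hV : ∀ i, V i ∈ convexHull ℝ (range V) := fun i => subset_convexHull ℝ _ ⟨i, rfl⟩
  have hlower : ∀ v : convexHull ℝ (range V),
      ⨅ i, (J (x - t • V i) + t * b i) ≤
        J (x - t • (v : EuclideanSpace ℝ (Fin n))) + t * Hstar v := by
    rintro ⟨v, hv⟩
    obtain ⟨_, ⟨i, rfl⟩, hi⟩ := (hJ.sub_smul_fst_add_mul_snd x t).exists_le_of_mem_convexHull
      (subset_univ _) (mk_maxAffineConjugate_mem_convexHull V b hv)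
    rw [hHstar v hv]
    exact (ciInf_le (finite_range _).bddBelow i).trans hi
  have : Nonempty (convexHull ℝ (range V)) := ⟨⟨_, hV ⟨0, hm⟩⟩⟩
  refine le_antisymm (le_ciInf fun i => ?_) (le_ciInf hlower)
  calc _ ≤ J (x - t • V i) + t * Hstar (V i) :=
        ciInf_le ⟨_, forall_mem_range.2 hlower⟩ ⟨V i, hV i⟩
    _ ≤ J (x - t • V i) + t * b i := by
      rw [hHstar _ (hV i)]
      gcongr
      exact maxAffineConjugate_le V b i

/-- For concave initial data `J` and piecewise-affine convex Hamiltonian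
`H p = max_i (⟨p, v_i⟩ - b_i)` satisfying assumption (H), the Lax--Oleinik
formula equals the second neural network architecture `f₂`. -/
theorem laxOleinik_eq_secondArchitecture (n m : ℕ) (hn : 1 ≤ n) (hm : 1 ≤ m)
    (J : EuclideanSpace ℝ (Fin n) → ℝ) (hJ : ConcaveOn ℝ Set.univ J)
    (V : Fin m → EuclideanSpace ℝ (Fin n)) (b : Fin m → ℝ)
    (ℓ : EuclideanSpace ℝ (Fin n) → ℝ) (hℓconv : ConvexOn ℝ Set.univ ℓ)
    (hℓ : ∀ i, ℓ (V i) = b i)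
    (H : EuclideanSpace ℝ (Fin n) → ℝ)
    (hH : ∀ p, H p = ⨆ i : Fin m, (⟪p, V i⟫ - b i))
    (Hstar : EuclideanSpace ℝ (Fin n) → ℝ)
    (hHstar : ∀ v ∈ convexHull ℝ (Set.range V),
      Hstar v = ⨆ p : EuclideanSpace ℝ (Fin n), (⟪p, v⟫ - H p))
    (x : EuclideanSpace ℝ (Fin n)) (t : ℝ) (ht : 0 < t) :
    (⨅ v : (convexHull ℝ (Set.range V) : Set (EuclideanSpace ℝ (Fin n))),
        (J (x - t • (v : EuclideanSpace ℝ (Fin n))) + t * Hstar v)) =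
      ⨅ i : Fin m, (J (x - t • V i) + t * b i) :=
  laxOleinik_eq_secondArchitecture_general n m hm J hJ V b H hH Hstar hHstar x t ht
end
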